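/- Suppose an arm k is pulled n times with i.i.d. rewards in [0,1] with true mean μ_k, its cumulative withheld savings are at most M, the leading arm has true effective mean μ* with gap Δ = μ* − μ_k > 0, and n ≥ max{6M/Δ, 162 log T/Δ²}. If additionally the empirical mean deviations satisfy |μ̂_k − μ_k| < Δ/2 and μ* − μ̂* < √(2 log T/n), then the elimination condition μ̃_k + α ≥ μ̃* − α (with α = √(2 log T/n) and μ̃ = μ̂ − savings/n) fails, i.e., arm k is eliminated. -/
import Mathlib


open Real

/-- Deterministic elimination step of Lemma 1: under bounded savings, a
sufficiently pulled suboptimal arm fails the elimination test (is eliminated). -/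
theorem stmt13 (T M Δ n : ℝ) (hT : 2 ≤ T) (hM : 0 ≤ M) (hn : 0 < n)
    (μk μstar μhatk μhatstar Sk Sstar : ℝ)
    (hΔ : Δ = μstar - μk) (hΔpos : 0 < Δ)
    (hSk : 0 ≤ Sk) (hSkM : Sk ≤ M) (hSstar : 0 ≤ Sstar) (hSstarM : Sstar ≤ M)
    (hnbig : max (6 * M / Δ) (162 * Real.log T / Δ ^ 2) ≤ n)
    (hdevk : |μhatk - μk| < Δ / 2)
    (hdevstar : μstar - μhatstar < Real.sqrt (2 * Real.log T / n)) :
    (μhatk - Sk / n) + Real.sqrt (2 * Real.log T / n)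
      < (μhatstar - Sstar / n) - Real.sqrt (2 * Real.log T / n) := by
  set α := Real.sqrt (2 * Real.log T / n) with hα
  have hlog : 0 ≤ Real.log T := Real.log_nonneg (by linarith)
  have h1 : 6 * M / Δ ≤ n := le_trans (le_max_left _ _) hnbig
  have h2 : 162 * Real.log T / Δ ^ 2 ≤ n := le_trans (le_max_right _ _) hnbig
  have hMn : M / n ≤ Δ / 6 := by
    rw [div_le_div_iff₀ hn (by norm_num)]
    have := (div_le_iff₀ hΔpos).mp h1
    nlinarith
  have hαle : α ≤ Δ / 9 := by
    have hq : 2 * Real.log T / n ≤ (Δ / 9) ^ 2 := by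
      rw [div_le_iff₀ hn]
      have := (div_le_iff₀ (by positivity : (0:ℝ) < Δ ^ 2)).mp h2
      nlinarith
    calc α ≤ Real.sqrt ((Δ / 9) ^ 2) := Real.sqrt_le_sqrt hq
      _ = Δ / 9 := Real.sqrt_sq (by linarith)
  have hSkn : 0 ≤ Sk / n := div_nonneg hSk hn.le
  have hSsn : Sstar / n ≤ M / n := div_le_div_of_nonneg_right hSstarM hn.le
  have habs : μhatk - μk < Δ / 2 := (abs_lt.mp hdevk).2
  nlinarith [hαle, hMn, hSkn, hSsn, habs, hdevstar]
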